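/- arXiv:1512.02072 — 3 statements merged into one kernel-verified Lean document; each statement's English description precedes it below -/
import Mathlib

section
/- Let g_1,...,g_N be differentiable functions on R such that there exists a matrix-valued function Λ : R → C^{N×N} with differentiable entries satisfying G(x+b) = Λ(b)G(x) for all x, b ∈ R, where G = (g_1,...,g_N)^T. Then each g_n is a linear combination of functions of the form x^k 2^{αx} with k ∈ N and α ∈ C. -/
/-!
Differentiating `G(x + b) = Λ(b) G(x)` at `b = 0` gives the linear system `G' = A G` with
`A = Λ'(0)`, so the combinations `F c = ∑ cⱼ gⱼ` satisfy `(F c)' = F (Aᵀ c)`. If `c` is a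
generalized eigenvector of `Aᵀ` for `μ`, induction along its Jordan chain, solving
`f' = μ f + Q(x) e^{μx}` with `Q` a polynomial at each step, shows that `F c` is a polynomial
times `e^{μx} = 2^{(μ / log 2) x}`. Over `ℂ` the generalized eigenvectors span `ℂᴺ`, and
`gₙ = F eₙ`.
-/

open Complex Polynomial

theorem Polynomial.exists_derivative_eq {K : Type*} [Field K] [CharZero K] (Q : K[X]) :
    ∃ R : K[X], derivative R = Q := by
  induction Q using Polynomial.induction_on' with
  | add p q hp hq =>
    obtain ⟨R₁, rfl⟩ := hp
    obtain ⟨R₂, rfl⟩ := hq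
    exact ⟨R₁ + R₂, derivative_add⟩
  | monomial k a =>
    refine ⟨C (a / (k + 1)) * X ^ (k + 1), ?_⟩
    rw [derivative_C_mul_X_pow, Nat.add_sub_cancel, Nat.cast_succ,
      div_mul_cancel₀ a (Nat.cast_add_one_ne_zero k), C_mul_X_pow_eq_monomial]

theorem Complex.cpow_div_log_mul {z : ℂ} (hz : z ≠ 0) (hlog : log z ≠ 0) (μ w : ℂ) :
    z ^ (μ / log z * w) = exp (μ * w) := by
  rw [cpow_def_of_ne_zero hz]
  congr 1
  field_simp

theorem Complex.log_two_ne_zero : log 2 ≠ 0 := by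
  rw [← ofReal_ofNat, ← ofReal_log zero_le_two, ofReal_ne_zero]
  exact Real.log_ne_zero_of_pos_of_ne_one zero_lt_two (by norm_num)

def expPolynomials : Submodule ℂ (ℝ → ℂ) :=
  Submodule.span ℂ (Set.range fun p : ℕ × ℂ => fun x : ℝ => (x : ℂ) ^ p.1 * 2 ^ (p.2 * x))

theorem exists_finset_sum_of_mem_expPolynomials {f : ℝ → ℂ} (hf : f ∈ expPolynomials) :
    ∃ (s : Finset (ℕ × ℂ)) (c : ℕ × ℂ → ℂ),
      ∀ x : ℝ, f x = ∑ p ∈ s, c p * (x : ℂ) ^ p.1 * (2 : ℂ) ^ (p.2 * x) := by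
  obtain ⟨c, rfl⟩ := Finsupp.mem_span_range_iff_exists_finsupp.mp hf
  refine ⟨c.support, c, fun x => ?_⟩
  simp only [Finsupp.sum, Finset.sum_apply, Pi.smul_apply, smul_eq_mul, mul_assoc]

theorem polynomial_mul_exp_mem_expPolynomials (P : ℂ[X]) (μ : ℂ) :
    (fun x : ℝ => P.eval (x : ℂ) * exp (μ * x)) ∈ expPolynomials := by
  induction P using Polynomial.induction_on' with
  | add p q hp hq =>
    convert add_mem hp hq using 1
    ext x
    simp only [eval_add, add_mul, Pi.add_apply]
  | monomial k a =>
    have hmem : (fun x : ℝ => (x : ℂ) ^ k * 2 ^ (μ / log 2 * x)) ∈ expPolynomials :=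
      Submodule.subset_span ⟨(k, μ / log 2), rfl⟩
    convert Submodule.smul_mem _ a hmem using 1
    ext x
    simp only [eval_monomial, Pi.smul_apply, smul_eq_mul,
      cpow_div_log_mul two_ne_zero log_two_ne_zero, mul_assoc]

theorem exists_polynomial_mul_exp_of_hasDerivAt {f f' : ℝ → ℂ} {μ : ℂ} {Q : ℂ[X]}
    (hf : ∀ x, HasDerivAt f (f' x) x) (hf' : ∀ x, f' x = μ * f x + Q.eval (x : ℂ) * exp (μ * x)) :
    ∃ P : ℂ[X], ∀ x : ℝ, f x = P.eval (x : ℂ) * exp (μ * x) := by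
  obtain ⟨R, hR⟩ := Q.exists_derivative_eq
  -- `f e^{-μx} - R` has derivative `(f' - μ f) e^{-μx} - Q = 0`
  set φ : ℝ → ℂ := fun x => f x * exp (-μ * x) - R.eval (x : ℂ)
  have hφ : ∀ x, HasDerivAt φ 0 x := by
    intro x
    have hexp : HasDerivAt (fun y : ℝ => exp (-μ * y)) (exp (-μ * x) * -μ) x := by
      simpa using ((hasDerivAt_id (x : ℂ)).const_mul (-μ)).cexp.comp_ofReal
    refine (((hf x).mul hexp).sub (R.hasDerivAt (x : ℂ)).comp_ofReal).congr_deriv ?_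
    have hinv : exp (μ * x) * exp (-μ * x) = 1 := by rw [← exp_add]; simp
    rw [hR, hf']
    linear_combination Q.eval (x : ℂ) * hinv
  refine ⟨R + C (φ 0), fun x => ?_⟩
  have hconst : φ x = φ 0 :=
    is_const_of_deriv_eq_zero (fun y => (hφ y).differentiableAt) (fun y => (hφ y).deriv) x 0
  simp only [φ, eval_add, eval_C] at hconst ⊢
  rw [← hconst, add_sub_cancel, mul_assoc, ← exp_add]
  simp

section GeneralizedEigenvectors

variable {M : Type*} [AddCommGroup M] [Module ℂ M] {T : Module.End ℂ M} {F : M →ₗ[ℂ] ℝ → ℂ}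

theorem exists_polynomial_mul_exp_of_mem_maxGenEigenspace
    (hF : ∀ c x, HasDerivAt (F c) (F (T c) x) x) {μ : ℂ} {c : M}
    (hc : c ∈ T.maxGenEigenspace μ) :
    ∃ P : ℂ[X], ∀ x : ℝ, F c x = P.eval (x : ℂ) * exp (μ * x) := by
  obtain ⟨k, hk⟩ := (Module.End.mem_maxGenEigenspace T μ c).mp hc
  clear hc
  induction k generalizing c with
  | zero => exact ⟨0, fun x => by simp_all⟩
  | succ k ih =>
    rw [pow_succ, Module.End.mul_apply] at hk
    obtain ⟨Q, hQ⟩ := ih hk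
    refine exists_polynomial_mul_exp_of_hasDerivAt (Q := Q) (hF c) fun x => ?_
    rw [← hQ]
    simp

theorem apply_mem_expPolynomials [FiniteDimensional ℂ M]
    (hF : ∀ c x, HasDerivAt (F c) (F (T c) x) x) (c : M) : F c ∈ expPolynomials := by
  suffices h : ⨆ μ, T.maxGenEigenspace μ ≤ expPolynomials.comap F by
    exact h (T.iSup_maxGenEigenspace_eq_top ▸ Submodule.mem_top)
  refine iSup_le fun μ c hc => ?_
  obtain ⟨P, hP⟩ := exists_polynomial_mul_exp_of_mem_maxGenEigenspace hF hc
  rw [Submodule.mem_comap, funext hP]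
  exact polynomial_mul_exp_mem_expPolynomials P μ

end GeneralizedEigenvectors

section Shift

variable {ι : Type*} [Fintype ι] {g : ι → ℝ → ℂ}

theorem hasDerivAt_of_shift_eq_sum {Λ : ℝ → Matrix ι ι ℂ}
    (hΛ : ∀ i j, DifferentiableAt ℝ (fun b => Λ b i j) 0)
    (hshift : ∀ (b x : ℝ) (i : ι), g i (x + b) = ∑ j, Λ b i j * g j x) (i : ι) (x : ℝ) :
    HasDerivAt (g i) (∑ j, deriv (fun b => Λ b i j) 0 * g j x) x := by
  have hsum : HasDerivAt (fun b => ∑ j, Λ b i j * g j x)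
      (∑ j, deriv (fun b => Λ b i j) 0 * g j x) (x - x) := by
    rw [sub_self]
    exact HasDerivAt.fun_sum fun j _ => (hΛ i j).hasDerivAt.mul_const (g j x)
  have hg : g i = fun y => ∑ j, Λ (y - x) i j * g j x :=
    funext fun y => by rw [← hshift, add_sub_cancel]
  rw [hg]
  exact hsum.comp_sub_const x x

theorem hasDerivAt_linearCombination {A : Matrix ι ι ℂ}
    (hg : ∀ i x, HasDerivAt (g i) (∑ j, A i j * g j x) x) (c : ι → ℂ) (x : ℝ) :
    HasDerivAt (Fintype.linearCombination ℂ g c)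
      (Fintype.linearCombination ℂ g (A.transpose.mulVecLin c) x) x := by
  have hfun : Fintype.linearCombination ℂ g c = fun y => ∑ i, c i * g i y := by
    ext y
    simp [Fintype.linearCombination_apply]
  rw [hfun]
  refine (HasDerivAt.fun_sum fun i _ => (hg i x).const_mul (c i)).congr_deriv ?_
  simp only [Fintype.linearCombination_apply, Finset.sum_apply, Pi.smul_apply, smul_eq_mul,
    Matrix.mulVecLin_apply, Matrix.mulVec, dotProduct, Matrix.transpose_apply, Finset.mul_sum,
    Finset.sum_mul]
  rw [Finset.sum_comm]
  exact Finset.sum_congr rfl fun j _ => Finset.sum_congr rfl fun i _ => by ring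

end Shift

theorem shiftable_family_is_exponential_polynomial_general
    (N : ℕ) (g : Fin N → ℝ → ℂ)
    (Λ : ℝ → Matrix (Fin N) (Fin N) ℂ)
    (hΛ : ∀ i j, Differentiable ℝ (fun b => Λ b i j))
    (hshift : ∀ (b x : ℝ) (i : Fin N),
      g i (x + b) = ∑ j : Fin N, Λ b i j * g j x) :
    ∀ n : Fin N, ∃ (s : Finset (ℕ × ℂ)) (c : ℕ × ℂ → ℂ),
      ∀ x : ℝ, g n x = ∑ p ∈ s, c p * (x : ℂ) ^ p.1 * (2 : ℂ) ^ (p.2 * x) := by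
  intro n
  have hg := hasDerivAt_of_shift_eq_sum (fun i j => hΛ i j 0) hshift
  have hmem := apply_mem_expPolynomials (hasDerivAt_linearCombination hg) (Pi.single n 1)
  rw [Fintype.linearCombination_apply_single, one_smul] at hmem
  exact exists_finset_sum_of_mem_expPolynomials hmem

/-- **Classification of finite-dimensional translation-invariant families**
(Proposition 3).  If `g₁, …, g_N : ℝ → ℂ` are differentiable and there is a
matrix-valued function `Λ : ℝ → ℂ^{N×N}` with differentiable entries such that
`G(x+b) = Λ(b) G(x)` for all `x, b`, then each `gₙ` is a finite linear
combination of the exponential–polynomial functions `x ↦ xᵏ 2^{αx}`,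
`k ∈ ℕ`, `α ∈ ℂ`. -/
theorem shiftable_family_is_exponential_polynomial
    (N : ℕ) (g : Fin N → ℝ → ℂ)
    (hg : ∀ n, Differentiable ℝ (g n))
    (Λ : ℝ → Matrix (Fin N) (Fin N) ℂ)
    (hΛ : ∀ i j, Differentiable ℝ (fun b => Λ b i j))
    (hshift : ∀ (b x : ℝ) (i : Fin N),
      g i (x + b) = ∑ j : Fin N, Λ b i j * g j x) :
    ∀ n : Fin N, ∃ (s : Finset (ℕ × ℂ)) (c : ℕ × ℂ → ℂ),
      ∀ x : ℝ, g n x = ∑ p ∈ s, c p * (x : ℂ) ^ p.1 * (2 : ℂ) ^ (p.2 * x) :=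
  shiftable_family_is_exponential_polynomial_general N g Λ hΛ hshift
end

section
/- Let m_1,...,m_N be differentiable functions on (0,∞) such that for every a ∈ (0,∞) there exists a matrix Λ(a) with differentiable entries satisfying M(a·x) = Λ(a)M(x) for all x > 0, where M = (m_1,...,m_N)^T. Then each m_n is a linear combination of functions of the form (log_2 x)^k x^α with k ∈ N and α ∈ C. -/
/-!
For `g(t) = M(eᵗ)` we have `g(s) = Λ(e^{s-t}) g(t)`, so differentiating at `s = t` gives the
constant-coefficient system `g' = A g` with `A = Λ'(1)`. By Cayley–Hamilton the product of the
factors `A - μ` over the eigenvalues `μ` of `A` annihilates `g`; peeling off one factor at a time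
reduces the system to scalar equations `f' = μ f + h`, and if `h` is a combination of the
functions `tᵏ e^{μt}` then so is `f` (multiply by `e^{-μt}` and integrate). Finally
`tᵏ e^{μt}` at `t = log x` is `(log 2)ᵏ (log₂ x)ᵏ x^μ`.
-/

open Complex Real

def expPoly : Submodule ℂ (ℝ → ℂ) :=
  Submodule.span ℂ (Set.range fun p : ℕ × ℂ => fun t : ℝ => (t : ℂ) ^ p.1 * cexp (p.2 * t))

theorem monomial_mem_expPoly (k : ℕ) (μ : ℂ) :
    (fun t : ℝ => (t : ℂ) ^ k * cexp (μ * t)) ∈ expPoly :=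
  Submodule.subset_span ⟨(k, μ), rfl⟩

theorem const_mem_expPoly (c : ℂ) : (fun _ : ℝ => c) ∈ expPoly := by
  convert expPoly.smul_mem c (monomial_mem_expPoly 0 0) using 1
  ext
  simp

theorem exp_mul_mem_expPoly (μ : ℂ) {f : ℝ → ℂ} (hf : f ∈ expPoly) :
    (fun t : ℝ => cexp (μ * t) * f t) ∈ expPoly := by
  induction hf using Submodule.span_induction with
  | mem f hf =>
    obtain ⟨⟨k, ν⟩, rfl⟩ := hf
    convert monomial_mem_expPoly k (ν + μ) using 2 with t
    rw [add_mul, Complex.exp_add]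
    ring
  | zero => simpa using const_mem_expPoly 0
  | add f g _ _ hf hg =>
    convert expPoly.add_mem hf hg using 1
    ext
    simp only [Pi.add_apply, mul_add]
  | smul c f _ hf =>
    convert expPoly.smul_mem c hf using 1
    ext
    simp only [Pi.smul_apply, smul_eq_mul]
    ring

theorem exists_sum_of_mem_expPoly {f : ℝ → ℂ} (hf : f ∈ expPoly) :
    ∃ (s : Finset (ℕ × ℂ)) (c : ℕ × ℂ → ℂ),
      ∀ t : ℝ, f t = ∑ p ∈ s, c p * (t : ℂ) ^ p.1 * cexp (p.2 * t) := by
  obtain ⟨c, rfl⟩ := Finsupp.mem_span_range_iff_exists_finsupp.mp hf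
  exact ⟨c.support, c, fun t => by simp [Finsupp.sum, Finset.sum_apply, mul_assoc]⟩

theorem hasDerivAt_cexp_mul (μ : ℂ) (t : ℝ) :
    HasDerivAt (fun t : ℝ => cexp (μ * t)) (μ * cexp (μ * t)) t := by
  simpa [mul_comm] using ((hasDerivAt_id (t : ℂ)).const_mul μ).cexp.comp_ofReal

theorem hasDerivAt_monomial (k : ℕ) (μ : ℂ) (t : ℝ) :
    HasDerivAt (fun t : ℝ => (t : ℂ) ^ k * cexp (μ * t))
      (k * (t : ℂ) ^ (k - 1) * cexp (μ * t) + μ * ((t : ℂ) ^ k * cexp (μ * t))) t := by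
  exact ((hasDerivAt_pow k (t : ℂ)).comp_ofReal.mul (hasDerivAt_cexp_mul μ t)).congr_deriv
    (by ring)

theorem exists_hasDerivAt_monomial (k : ℕ) (μ : ℂ) :
    ∃ F ∈ expPoly, ∀ t : ℝ, HasDerivAt F ((t : ℂ) ^ k * cexp (μ * t)) t := by
  rcases eq_or_ne μ 0 with rfl | hμ
  · refine ⟨((k : ℂ) + 1)⁻¹ • fun t : ℝ => (t : ℂ) ^ (k + 1) * cexp (0 * t),
      expPoly.smul_mem _ (monomial_mem_expPoly _ _), fun t => ?_⟩
    refine ((hasDerivAt_monomial (k + 1) 0 t).const_smul ((k : ℂ) + 1)⁻¹).congr_deriv ?_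
    have : (k : ℂ) + 1 ≠ 0 := by exact_mod_cast k.succ_ne_zero
    simp only [Nat.cast_add, Nat.cast_one, add_tsub_cancel_right, zero_mul, Complex.exp_zero,
      mul_one, add_zero, smul_eq_mul]
    field_simp
  induction k with
  | zero =>
    refine ⟨μ⁻¹ • fun t : ℝ => (t : ℂ) ^ 0 * cexp (μ * t),
      expPoly.smul_mem _ (monomial_mem_expPoly _ _), fun t => ?_⟩
    refine ((hasDerivAt_monomial 0 μ t).const_smul μ⁻¹).congr_deriv ?_
    simp only [CharP.cast_eq_zero, zero_tsub, pow_zero, mul_one, zero_mul, one_mul, zero_add,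
      smul_eq_mul]
    field_simp
  | succ k ih =>
    obtain ⟨F, hF, hF'⟩ := ih
    -- integration by parts: `(tᵏ⁺¹ e^{μt})' = (k+1) tᵏ e^{μt} + μ tᵏ⁺¹ e^{μt}`
    refine ⟨μ⁻¹ • ((fun t : ℝ => (t : ℂ) ^ (k + 1) * cexp (μ * t)) - ((k : ℂ) + 1) • F),
      expPoly.smul_mem _ (expPoly.sub_mem (monomial_mem_expPoly _ _) (expPoly.smul_mem _ hF)),
      fun t => ?_⟩
    refine (((hasDerivAt_monomial (k + 1) μ t).sub ((hF' t).const_smul ((k : ℂ) + 1))).const_smul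
      μ⁻¹).congr_deriv ?_
    simp only [smul_eq_mul, Nat.add_sub_cancel]
    push_cast
    field_simp
    ring

theorem exists_hasDerivAt_of_mem_expPoly {g : ℝ → ℂ} (hg : g ∈ expPoly) :
    ∃ F ∈ expPoly, ∀ t : ℝ, HasDerivAt F (g t) t := by
  induction hg using Submodule.span_induction with
  | mem g hg =>
    obtain ⟨⟨k, μ⟩, rfl⟩ := hg
    exact exists_hasDerivAt_monomial k μ
  | zero => exact ⟨0, expPoly.zero_mem, fun t => hasDerivAt_const t 0⟩
  | add f g _ _ hf hg =>
    obtain ⟨F, hF, hF'⟩ := hf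
    obtain ⟨G, hG, hG'⟩ := hg
    exact ⟨F + G, expPoly.add_mem hF hG, fun t => (hF' t).add (hG' t)⟩
  | smul c f _ hf =>
    obtain ⟨F, hF, hF'⟩ := hf
    exact ⟨c • F, expPoly.smul_mem c hF, fun t => (hF' t).const_smul c⟩

theorem mem_expPoly_of_hasDerivAt {f g : ℝ → ℂ} (hf : ∀ t, HasDerivAt f (g t) t)
    (hg : g ∈ expPoly) : f ∈ expPoly := by
  obtain ⟨F, hF, hF'⟩ := exists_hasDerivAt_of_mem_expPoly hg
  have hconst : ∀ t, f t - F t = f 0 - F 0 := fun t =>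
    is_const_of_deriv_eq_zero (fun t => ((hf t).sub (hF' t)).differentiableAt)
      (fun t => by simpa using ((hf t).sub (hF' t)).deriv) t 0
  have hf_eq : f = F + fun _ => f 0 - F 0 := by
    ext t
    simp [← hconst t]
  rw [hf_eq]
  exact expPoly.add_mem hF (const_mem_expPoly _)

theorem mem_expPoly_of_hasDerivAt_mul_add {f g : ℝ → ℂ} {μ : ℂ}
    (hf : ∀ t, HasDerivAt f (μ * f t + g t) t) (hg : g ∈ expPoly) : f ∈ expPoly := by
  have hdamped : (fun t : ℝ => cexp (-μ * t) * f t) ∈ expPoly := by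
    refine mem_expPoly_of_hasDerivAt (fun t => ?_) (exp_mul_mem_expPoly (-μ) hg)
    exact ((hasDerivAt_cexp_mul (-μ) t).mul (hf t)).congr_deriv (by ring)
  convert exp_mul_mem_expPoly μ hdamped using 2 with t
  rw [← mul_assoc, ← Complex.exp_add]
  simp

section LinearSystem

open Polynomial Matrix

variable {ι : Type*} [Fintype ι] [DecidableEq ι]

theorem HasDerivAt.mulVec {G : ℝ → ι → ℂ} {G' : ι → ℂ} {t : ℝ} (A : Matrix ι ι ℂ)
    (hG : HasDerivAt G G' t) : HasDerivAt (fun t => A *ᵥ G t) (A *ᵥ G') t :=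
  ((toLin' A).toContinuousLinearMap.restrictScalars ℝ).hasFDerivAt.comp_hasDerivAt t hG

theorem mem_expPoly_of_aeval_mulVec_eq_zero (B : Matrix ι ι ℂ) (s : Multiset ℂ)
    {G : ℝ → ι → ℂ} (hG : ∀ t, HasDerivAt G (B *ᵥ G t) t)
    (hann : ∀ t, aeval B (s.map fun μ => X - C μ).prod *ᵥ G t = 0) (i : ι) :
    (fun t => G t i) ∈ expPoly := by
  induction s using Multiset.induction_on generalizing G with
  | empty =>
    simp only [Multiset.map_zero, Multiset.prod_zero, map_one, one_mulVec] at hann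
    simpa [hann] using const_mem_expPoly 0
  | cons μ s ih =>
    set D : Matrix ι ι ℂ := B - μ • 1 with hD
    have hD_aeval : aeval B (X - C μ) = D := by
      simp [hD, Algebra.algebraMap_eq_smul_one]
    have hDG : ∀ t, HasDerivAt (fun t => D *ᵥ G t) (B *ᵥ (D *ᵥ G t)) t := fun t => by
      simpa only [mulVec_mulVec, hD, sub_mul, mul_sub, smul_mul, Matrix.mul_smul,
        Matrix.one_mul, Matrix.mul_one] using (hG t).mulVec D
    have hannD : ∀ t, aeval B (s.map fun μ => X - C μ).prod *ᵥ (D *ᵥ G t) = 0 := fun t => by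
      rw [mulVec_mulVec, ← hD_aeval, ← map_mul, mul_comm, ← Multiset.prod_cons,
        ← Multiset.map_cons (fun μ => X - C μ)]
      exact hann t
    refine mem_expPoly_of_hasDerivAt_mul_add (μ := μ) (fun t => ?_) (ih hDG hannD)
    refine (hasDerivAt_pi.mp (hG t) i).congr_deriv ?_
    simp [hD, sub_mulVec, smul_mulVec]

theorem mem_expPoly_of_hasDerivAt_mulVec (B : Matrix ι ι ℂ) {G : ℝ → ι → ℂ}
    (hG : ∀ t, HasDerivAt G (B *ᵥ G t) t) (i : ι) : (fun t => G t i) ∈ expPoly := by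
  refine mem_expPoly_of_aeval_mulVec_eq_zero B B.charpoly.roots hG (fun t => ?_) i
  rw [← (IsAlgClosed.splits B.charpoly).eq_prod_roots_of_monic B.charpoly_monic,
    aeval_self_charpoly, zero_mulVec]

end LinearSystem

open Matrix in
theorem hasDerivAt_comp_exp_of_scaling {ι : Type*} [Fintype ι] {m : ι → ℝ → ℂ}
    {Λ : ℝ → Matrix ι ι ℂ} (hΛ : ∀ i j, DifferentiableAt ℝ (fun a => Λ a i j) 1)
    (hscale : ∀ a ∈ Set.Ioi (0 : ℝ), ∀ x ∈ Set.Ioi (0 : ℝ), ∀ i,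
      m i (a * x) = ∑ j, Λ a i j * m j x) (t : ℝ) :
    HasDerivAt (fun t i => m i (rexp t))
      (Matrix.of (fun i j => deriv (fun a => Λ a i j) 1) *ᵥ fun i => m i (rexp t)) t := by
  rw [hasDerivAt_pi]
  intro i
  have hshift : (fun s => m i (rexp s)) = fun s => ∑ j, Λ (rexp (s - t)) i j * m j (rexp t) := by
    ext s
    rw [← hscale _ (exp_pos _) _ (exp_pos _), ← Real.exp_add, sub_add_cancel]
  rw [hshift]
  have hexp : HasDerivAt (fun s => rexp (s - t)) 1 t := by
    simpa using ((hasDerivAt_id t).sub_const t).exp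
  show HasDerivAt _ (∑ j, deriv (fun a => Λ a i j) 1 * m j (rexp t)) t
  refine HasDerivAt.fun_sum fun j _ => ?_
  have hΛj := (hΛ i j).hasDerivAt
  rw [← show rexp (t - t) = 1 by simp] at hΛj
  simpa using (hΛj.scomp t hexp).mul_const (m j (rexp t))

theorem scalable_family_is_log_power_general
    (N : ℕ) (m : Fin N → ℝ → ℂ)
    (Λ : ℝ → Matrix (Fin N) (Fin N) ℂ)
    (hΛ : ∀ i j, DifferentiableOn ℝ (fun a => Λ a i j) (Set.Ioi (0 : ℝ)))
    (hscale : ∀ a ∈ Set.Ioi (0 : ℝ), ∀ x ∈ Set.Ioi (0 : ℝ), ∀ i : Fin N,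
      m i (a * x) = ∑ j : Fin N, Λ a i j * m j x) :
    ∀ n : Fin N, ∃ (s : Finset (ℕ × ℂ)) (c : ℕ × ℂ → ℂ),
      ∀ x ∈ Set.Ioi (0 : ℝ),
        m n x = ∑ p ∈ s, c p * (Real.logb 2 x : ℂ) ^ p.1 * (x : ℂ) ^ p.2 := by
  intro n
  have hode := hasDerivAt_comp_exp_of_scaling
    (fun i j => (hΛ i j).differentiableAt (Ioi_mem_nhds one_pos)) hscale
  obtain ⟨s, c, hc⟩ := exists_sum_of_mem_expPoly (mem_expPoly_of_hasDerivAt_mulVec _ hode n)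
  refine ⟨s, fun p => c p * (Real.log 2 : ℂ) ^ p.1, fun x hx => ?_⟩
  have hx0 : (x : ℂ) ≠ 0 := ofReal_ne_zero.mpr (ne_of_gt hx)
  have hlog : (Real.log x : ℂ) = Real.log 2 * Real.logb 2 x := by
    rw [Real.logb, ofReal_div, mul_div_cancel₀ _ (ofReal_ne_zero.mpr (Real.log_pos one_lt_two).ne')]
  have hcpow (α : ℂ) : cexp (α * Real.log x) = (x : ℂ) ^ α := by
    rw [cpow_def_of_ne_zero hx0, ← ofReal_log hx.le, mul_comm]
  rw [← Real.exp_log hx, hc, Real.exp_log hx]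
  refine Finset.sum_congr rfl fun p _ => ?_
  rw [hcpow, hlog, mul_pow]
  ring

/-- **Classification of finite-dimensional scalable families on `(0,∞)`**
(Proposition 4).  If `m₁, …, m_N` are differentiable on `(0,∞)` and for every
`a > 0` there is a matrix `Λ(a)` (with entries differentiable in `a` on
`(0,∞)`) such that `M(ax) = Λ(a) M(x)` for all `x > 0`, then each `mₙ` is a
finite linear combination of the functions `x ↦ (log₂ x)ᵏ xᵅ`,
`k ∈ ℕ`, `α ∈ ℂ`. -/
theorem scalable_family_is_log_power
    (N : ℕ) (m : Fin N → ℝ → ℂ)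
    (hm : ∀ n, DifferentiableOn ℝ (m n) (Set.Ioi (0 : ℝ)))
    (Λ : ℝ → Matrix (Fin N) (Fin N) ℂ)
    (hΛ : ∀ i j, DifferentiableOn ℝ (fun a => Λ a i j) (Set.Ioi (0 : ℝ)))
    (hscale : ∀ a ∈ Set.Ioi (0 : ℝ), ∀ x ∈ Set.Ioi (0 : ℝ), ∀ i : Fin N,
      m i (a * x) = ∑ j : Fin N, Λ a i j * m j x) :
    ∀ n : Fin N, ∃ (s : Finset (ℕ × ℂ)) (c : ℕ × ℂ → ℂ),
      ∀ x ∈ Set.Ioi (0 : ℝ),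
        m n x = ∑ p ∈ s, c p * (Real.logb 2 x : ℂ) ^ p.1 * (x : ℂ) ^ p.2 :=
  scalable_family_is_log_power_general N m Λ hΛ hscale
end

section
/- Fix σ > 0, l_max ∈ N, and real coefficients α_0,...,α_{l_max} with ∑_{l=0}^{l_max} α_l² = 1. Define m(ρ) = α_0/√N + ∑_{l=1}^{l_max} √(2/N) α_l cos(2πlρ/σ), where N = n_max ≥ 2 l_max + 1, and set ρ_n = 2^{σn/N} for n = 1,...,N. Then ∑_{n=1}^{N} |m(log_2(ρ_n x))|² = 1 for every x > 0. -/
/-!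
With `u = 2π log₂ x / σ`, the `n`-th sample `m (log₂ (ρₙ x))` is the cosine polynomial
`α₀/√N + ∑ₗ √(2/N) αₗ cos (l ψₙ)` at the equispaced phase `ψₙ = u + 2πn/N`.
For `N ∤ j` the sum of `cos (j ψₙ)` over `n = 1, …, N` vanishes: multiplied by `2 sin (πj/N)`
it telescopes. Since `2 lmax < N`, the cosines `cos (l ψₙ)`, `1 ≤ l ≤ lmax`, are therefore
orthogonal to the constants and to each other, each of squared norm `N/2`, and the sum of squares
is `N (α₀/√N)² + (N/2) ∑ₗ (√(2/N) αₗ)² = ∑ₗ αₗ² = 1`.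
-/

open Real Finset

theorem two_mul_sin_half_mul_sum_range_cos (θ a : ℝ) (N : ℕ) :
    2 * sin (a / 2) * ∑ n ∈ range N, cos (θ + n * a)
      = sin (θ + (N - 1 / 2) * a) - sin (θ - a / 2) := by
  have step : ∀ n : ℕ, 2 * sin (a / 2) * cos (θ + n * a)
      = sin (θ + ((n + 1 : ℕ) - 1 / 2) * a) - sin (θ + (n - 1 / 2) * a) := by
    intro n
    rw [sin_sub_sin]
    congr 3 <;> push_cast <;> ring
  rw [mul_sum, sum_congr rfl fun n _ => step n,
    sum_range_sub (fun n : ℕ => sin (θ + (n - 1 / 2) * a))]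
  congr 2; simp; ring

theorem sum_range_cos_add_mul_eq_zero {a : ℝ} {N : ℕ} (ha : sin (a / 2) ≠ 0) (k : ℤ)
    (hNa : N * a = k * (2 * π)) (θ : ℝ) :
    ∑ n ∈ range N, cos (θ + n * a) = 0 := by
  have h := two_mul_sin_half_mul_sum_range_cos θ a N
  rw [show θ + (N - 1 / 2) * a = θ - a / 2 + k * (2 * π) by linear_combination hNa,
    sin_add_int_mul_two_pi, sub_self] at h
  simpa [ha] using h

theorem sum_Icc_cos_int_mul_equispaced_eq_zero {N : ℕ} {j : ℤ} (hj : ¬ (N : ℤ) ∣ j) (u : ℝ) :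
    ∑ n ∈ Icc 1 N, cos (j * (u + 2 * π * n / N)) = 0 := by
  rcases N.eq_zero_or_pos with rfl | hN
  · simp
  have hN' : (N : ℝ) ≠ 0 := by positivity
  have hsin : sin (2 * π * j / N / 2) ≠ 0 := by
    rw [Ne, sin_eq_zero_iff]
    rintro ⟨q, hq⟩
    refine hj ⟨q, ?_⟩
    have : (j : ℝ) = N * q := by field_simp at hq; linear_combination -hq
    exact_mod_cast this
  rw [← Ico_add_one_right_eq_Icc, sum_Ico_eq_sum_range, add_tsub_cancel_right]
  convert sum_range_cos_add_mul_eq_zero hsin j (by field_simp) (j * u + 2 * π * j / N) using 3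
  push_cast; field_simp; ring

theorem sum_Icc_cos_mul_cos_equispaced {N l k : ℕ} (hl : 0 < l) (hk : 0 < k) (hlk : l + k < N)
    (u : ℝ) :
    ∑ n ∈ Icc 1 N, cos (l * (u + 2 * π * n / N)) * cos (k * (u + 2 * π * n / N))
      = if l = k then (N : ℝ) / 2 else 0 := by
  have hprod : ∀ n : ℕ, cos (l * (u + 2 * π * n / N)) * cos (k * (u + 2 * π * n / N))
      = (cos (((l - k : ℤ) : ℝ) * (u + 2 * π * n / N))
        + cos (((l + k : ℤ) : ℝ) * (u + 2 * π * n / N))) / 2 := by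
    intro n
    push_cast
    rw [sub_mul, add_mul, ← two_mul_cos_mul_cos]
    ring
  have hsum : ¬ (N : ℤ) ∣ (l + k) := fun h => by
    have := Int.le_of_dvd (by omega) h; omega
  rw [sum_congr rfl fun n _ => hprod n, ← sum_div, sum_add_distrib,
    sum_Icc_cos_int_mul_equispaced_eq_zero hsum, add_zero]
  split_ifs with h
  · subst h; simp
  · have hdiff : ¬ (N : ℤ) ∣ (l - k) := fun hd =>
      h (by have := Int.eq_zero_of_abs_lt_dvd hd (abs_lt.mpr ⟨by omega, by omega⟩); omega)
    rw [sum_Icc_cos_int_mul_equispaced_eq_zero hdiff, zero_div]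

theorem sum_Icc_sq_cosine_poly_equispaced (a₀ : ℝ) (a : ℕ → ℝ) {L N : ℕ} (hLN : 2 * L < N)
    (u : ℝ) :
    ∑ n ∈ Icc 1 N, (a₀ + ∑ l ∈ Icc 1 L, a l * cos (l * (u + 2 * π * n / N))) ^ 2
      = N * a₀ ^ 2 + N / 2 * ∑ l ∈ Icc 1 L, a l ^ 2 := by
  set c : ℕ → ℕ → ℝ := fun l n => cos (l * (u + 2 * π * n / N))
  have hlin : ∀ l ∈ Icc 1 L, a l * ∑ n ∈ Icc 1 N, c l n = 0 := fun l hl => by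
    simp only [mem_Icc] at hl
    rw [mul_eq_zero_of_right]
    exact_mod_cast sum_Icc_cos_int_mul_equispaced_eq_zero (j := l)
      (fun h => by have := Int.le_of_dvd (by omega) h; omega) u
  have hdiag : ∀ l ∈ Icc 1 L,
      ∑ k ∈ Icc 1 L, a l * a k * ∑ n ∈ Icc 1 N, c l n * c k n = N / 2 * a l ^ 2 :=
    fun l hl => by
      have horth : ∀ k ∈ Icc 1 L,
          ∑ n ∈ Icc 1 N, c l n * c k n = if l = k then (N : ℝ) / 2 else 0 := fun k hk => by
        simp only [mem_Icc] at hl hk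
        exact sum_Icc_cos_mul_cos_equispaced (by omega) (by omega) (by omega) u
      rw [sum_congr rfl fun k hk => by rw [horth k hk]]
      simp [hl, sq, mul_comm]
  calc ∑ n ∈ Icc 1 N, (a₀ + ∑ l ∈ Icc 1 L, a l * c l n) ^ 2
      = ∑ n ∈ Icc 1 N, (a₀ ^ 2 + 2 * a₀ * ∑ l ∈ Icc 1 L, a l * c l n
          + ∑ l ∈ Icc 1 L, ∑ k ∈ Icc 1 L, a l * a k * (c l n * c k n)) := by
        refine sum_congr rfl fun n _ => ?_
        rw [add_sq, sq (∑ l ∈ Icc 1 L, _), sum_mul_sum]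
        simp only [mul_mul_mul_comm]
    _ = N * a₀ ^ 2 + 2 * a₀ * ∑ l ∈ Icc 1 L, a l * ∑ n ∈ Icc 1 N, c l n
          + ∑ l ∈ Icc 1 L, ∑ k ∈ Icc 1 L, a l * a k * ∑ n ∈ Icc 1 N, c l n * c k n := by
        rw [sum_add_distrib, sum_add_distrib, ← mul_sum, sum_comm]
        simp only [sum_const, Nat.card_Icc, add_tsub_cancel_right, nsmul_eq_mul, mul_sum]
        rw [sum_comm (s := Icc 1 N)]
        exact congrArg _ (sum_congr rfl fun _ _ => sum_comm)
    _ = N * a₀ ^ 2 + N / 2 * ∑ l ∈ Icc 1 L, a l ^ 2 := by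
        rw [sum_eq_zero hlin, sum_congr rfl hdiag, mul_sum]; ring

/-- **Admissibility of trigonometric-polynomial multipliers sampled at `N`
log-scales** (Proposition 5).  With `σ > 0`, `N ≥ 2·lmax + 1`,
`∑_{l=0}^{lmax} αₗ² = 1`,
`m(ρ) = α₀/√N + ∑_{l=1}^{lmax} √(2/N) αₗ cos(2πlρ/σ)` and `ρₙ = 2^{σn/N}`,
one has `∑_{n=1}^{N} |m(log₂(ρₙ x))|² = 1` for every `x > 0`. -/
theorem trig_poly_multipliers_admissible
    (σ : ℝ) (hσ : 0 < σ) (lmax N : ℕ) (hN : 2 * lmax + 1 ≤ N)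
    (α : ℕ → ℝ) (hα : ∑ l ∈ Finset.range (lmax + 1), (α l) ^ 2 = 1)
    (m : ℝ → ℝ)
    (hm : ∀ ρ : ℝ, m ρ = α 0 / Real.sqrt N
        + ∑ l ∈ Finset.Icc 1 lmax,
            Real.sqrt (2 / N) * α l * Real.cos (2 * π * l * ρ / σ))
    (ρ' : ℕ → ℝ) (hρ' : ∀ n, ρ' n = (2 : ℝ) ^ (σ * n / N)) :
    ∀ x : ℝ, 0 < x →
      ∑ n ∈ Finset.Icc 1 N, (m (Real.logb 2 (ρ' n * x))) ^ 2 = 1 := by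
  intro x hx
  have hsample : ∀ n : ℕ, m (logb 2 (ρ' n * x)) = α 0 / √N + ∑ l ∈ Icc 1 lmax,
      √(2 / N) * α l * cos (l * (2 * π * logb 2 x / σ + 2 * π * n / N)) := fun n => by
    rw [hm, hρ', logb_mul (by positivity) hx.ne', logb_rpow two_pos (by norm_num)]
    congr! 4 with l
    field_simp
    ring
  have hNpos : (0 : ℝ) < N := by exact_mod_cast (by omega : 0 < N)
  simp only [hsample]
  rw [sum_Icc_sq_cosine_poly_equispaced _ (fun l => √(2 / N) * α l) (by omega),
    ← hα, range_eq_Ico, sum_eq_sum_Ico_succ_bot (by omega), zero_add,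
    Ico_add_one_right_eq_Icc]
  simp only [div_pow, mul_pow, sq_sqrt hNpos.le, sq_sqrt (div_nonneg zero_le_two hNpos.le),
    ← mul_sum]
  field_simp
end
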